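/- arXiv:2510.10798 — 2 statements merged into one kernel-verified Lean document; each statement's English description precedes it below -/
import Mathlib

section
/- If u : B → ℝ³ is a smooth Riesz field (div u = 0 and curl u = 0) on the unit ball B ⊂ ℝ³, then the vector field v(x) = x × u(x) is componentwise harmonic and satisfies div v = 0; consequently v solves the Lamé equation μΔv + (λ+μ)∇(div v) = 0 for all constants λ, μ. -/
open scoped BigOperators

/-- Partial derivative in direction `i` of a scalar function on `ℝ³`. -/
noncomputable def pd (i : Fin 3) (f : (Fin 3 → ℝ) → ℝ) (x : Fin 3 → ℝ) : ℝ :=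
  fderiv ℝ f x (Pi.single i 1)

/-- Laplacian of a scalar function on `ℝ³`. -/
noncomputable def lap3 (f : (Fin 3 → ℝ) → ℝ) (x : Fin 3 → ℝ) : ℝ :=
  ∑ i : Fin 3, pd i (fun y => pd i f y) x

/-- Divergence of a vector field on `ℝ³`. -/
noncomputable def div3 (u : (Fin 3 → ℝ) → (Fin 3 → ℝ)) (x : Fin 3 → ℝ) : ℝ :=
  ∑ i : Fin 3, pd i (fun y => u y i) x

/-- Curl of a vector field on `ℝ³`. -/
noncomputable def curl3 (u : (Fin 3 → ℝ) → (Fin 3 → ℝ)) (x : Fin 3 → ℝ) : Fin 3 → ℝ :=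
  ![pd 1 (fun y => u y 2) x - pd 2 (fun y => u y 1) x,
    pd 2 (fun y => u y 0) x - pd 0 (fun y => u y 2) x,
    pd 0 (fun y => u y 1) x - pd 1 (fun y => u y 0) x]

/-- The cross product in `ℝ³`. -/
def cross3 (a b : Fin 3 → ℝ) : Fin 3 → ℝ :=
  ![a 1 * b 2 - a 2 * b 1, a 2 * b 0 - a 0 * b 2, a 0 * b 1 - a 1 * b 0]

/-- The open Euclidean unit ball in `ℝ³`. -/
def B3 : Set (Fin 3 → ℝ) := {x | x 0 ^ 2 + x 1 ^ 2 + x 2 ^ 2 < 1}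

/- ### Auxiliary lemmas -/

lemma isOpen_B3 : IsOpen B3 := by
  have h : Continuous fun x : Fin 3 → ℝ => x 0 ^ 2 + x 1 ^ 2 + x 2 ^ 2 := by fun_prop
  exact isOpen_Iio.preimage h

lemma pd_congr {f g : (Fin 3 → ℝ) → ℝ} {x : Fin 3 → ℝ} (h : f =ᶠ[nhds x] g) (i : Fin 3) :
    pd i f x = pd i g x := by
  unfold pd; rw [h.fderiv_eq]

lemma pd_const (c : ℝ) (i : Fin 3) (x : Fin 3 → ℝ) : pd i (fun _ => c) x = 0 := by
  unfold pd; rw [fderiv_fun_const]; simp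

lemma pd_add {f g : (Fin 3 → ℝ) → ℝ} {x : Fin 3 → ℝ} (hf : DifferentiableAt ℝ f x)
    (hg : DifferentiableAt ℝ g x) (i : Fin 3) :
    pd i (fun y => f y + g y) x = pd i f x + pd i g x := by
  unfold pd; rw [fderiv_fun_add hf hg]; simp

lemma pd_sub {f g : (Fin 3 → ℝ) → ℝ} {x : Fin 3 → ℝ} (hf : DifferentiableAt ℝ f x)
    (hg : DifferentiableAt ℝ g x) (i : Fin 3) :
    pd i (fun y => f y - g y) x = pd i f x - pd i g x := by
  unfold pd; rw [fderiv_fun_sub hf hg]; simp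

lemma pd_const_mul {g : (Fin 3 → ℝ) → ℝ} {x : Fin 3 → ℝ} (hg : DifferentiableAt ℝ g x)
    (c : ℝ) (i : Fin 3) :
    pd i (fun y => c * g y) x = c * pd i g x := by
  unfold pd; rw [fderiv_const_mul hg]; simp

lemma pd_mul {f g : (Fin 3 → ℝ) → ℝ} {x : Fin 3 → ℝ} (hf : DifferentiableAt ℝ f x)
    (hg : DifferentiableAt ℝ g x) (i : Fin 3) :
    pd i (fun y => f y * g y) x = pd i f x * g x + f x * pd i g x := by
  unfold pd; rw [fderiv_fun_mul hf hg]; simp [mul_comm]; ring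

lemma diff_coord (j : Fin 3) (x : Fin 3 → ℝ) :
    DifferentiableAt ℝ (fun y : Fin 3 → ℝ => y j) x :=
  (ContinuousLinearMap.proj j : (Fin 3 → ℝ) →L[ℝ] ℝ).differentiableAt

lemma pd_coord (i j : Fin 3) (x : Fin 3 → ℝ) :
    pd i (fun y => y j) x = if i = j then 1 else 0 := by
  unfold pd
  have h : (fun y : Fin 3 → ℝ => y j) = (ContinuousLinearMap.proj j : (Fin 3 → ℝ) →L[ℝ] ℝ) := rfl
  rw [h, ContinuousLinearMap.fderiv]
  simp [ContinuousLinearMap.proj_apply, Pi.single_apply, eq_comm]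

lemma pd_coord_mul {g : (Fin 3 → ℝ) → ℝ} {x : Fin 3 → ℝ} (hg : DifferentiableAt ℝ g x)
    (i j : Fin 3) :
    pd i (fun y => y j * g y) x = (if i = j then 1 else 0) * g x + x j * pd i g x := by
  rw [pd_mul (diff_coord j x) hg, pd_coord]

lemma diff_pd {g : (Fin 3 → ℝ) → ℝ} {x : Fin 3 → ℝ} (hg : ContDiffAt ℝ 2 g x) (i : Fin 3) :
    DifferentiableAt ℝ (fun y => pd i g y) x := by
  have hd : DifferentiableAt ℝ (fderiv ℝ g) x :=
    (hg.fderiv_right (m := 1) le_rfl).differentiableAt one_ne_zero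
  exact hd.clm_apply (differentiableAt_const _)

lemma pd_comm {f : (Fin 3 → ℝ) → ℝ} {x : Fin 3 → ℝ} (hf : ContDiffAt ℝ 2 f x) (i j : Fin 3) :
    pd i (fun y => pd j f y) x = pd j (fun y => pd i f y) x := by
  have hs := hf.isSymmSndFDerivAt (by simp)
  have hd : DifferentiableAt ℝ (fderiv ℝ f) x :=
    (hf.fderiv_right (m := 1) le_rfl).differentiableAt one_ne_zero
  have key : ∀ a b : Fin 3, pd a (fun y => pd b f y) x
      = fderiv ℝ (fderiv ℝ f) x (Pi.single a 1) (Pi.single b 1) := by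
    intro a b
    unfold pd
    rw [show (fun y => fderiv ℝ f y (Pi.single b 1))
        = (fun y => (fderiv ℝ f y) ((fun _ => (Pi.single b 1 : Fin 3 → ℝ)) y)) from rfl]
    rw [fderiv_clm_apply hd (differentiableAt_const _)]
    simp
  rw [key, key, hs.eq]

section Main

variable {u : (Fin 3 → ℝ) → (Fin 3 → ℝ)}

lemma comp_cd (hu : ContDiffOn ℝ (⊤ : ℕ∞) u B3) {x : Fin 3 → ℝ} (hx : x ∈ B3) (k : Fin 3) :
    ContDiffAt ℝ 2 (fun y => u y k) x := by
  have h : ContDiffAt ℝ 2 u x :=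
    (hu.contDiffAt (isOpen_B3.mem_nhds hx)).of_le (by exact WithTop.coe_le_coe.mpr (le_top : (2 : ℕ∞) ≤ ⊤))
  exact contDiffAt_pi.mp h k

lemma pd_symm_eq (hcurl : ∀ x ∈ B3, curl3 u x = 0) {x : Fin 3 → ℝ} (hx : x ∈ B3) (j k : Fin 3) :
    pd j (fun y => u y k) x = pd k (fun y => u y j) x := by
  have h0 := congrFun (hcurl x hx) 0
  have h1 := congrFun (hcurl x hx) 1
  have h2 := congrFun (hcurl x hx) 2
  simp [curl3, sub_eq_zero] at h0 h1 h2
  fin_cases j <;> fin_cases k <;> simp_all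

lemma harm (hu : ContDiffOn ℝ (⊤ : ℕ∞) u B3) (hdiv : ∀ x ∈ B3, div3 u x = 0)
    (hcurl : ∀ x ∈ B3, curl3 u x = 0) {x : Fin 3 → ℝ} (hx : x ∈ B3) (k : Fin 3) :
    lap3 (fun y => u y k) x = 0 := by
  have hB : B3 ∈ nhds x := isOpen_B3.mem_nhds hx
  have step : ∀ j : Fin 3, pd j (fun y => pd j (fun z => u z k) y) x
      = pd k (fun y => pd j (fun z => u z j) y) x := by
    intro j
    have e1 : (fun y => pd j (fun z => u z k) y) =ᶠ[nhds x]
        (fun y => pd k (fun z => u z j) y) := by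
      filter_upwards [hB] with y hy
      exact pd_symm_eq hcurl hy j k
    rw [pd_congr e1, pd_comm (comp_cd hu hx j) j k]
  unfold lap3
  rw [Fin.sum_univ_three, step 0, step 1, step 2]
  have hsum : (fun y => pd 0 (fun z => u z 0) y + pd 1 (fun z => u z 1) y
      + pd 2 (fun z => u z 2) y) =ᶠ[nhds x] (fun _ => (0 : ℝ)) := by
    filter_upwards [hB] with y hy
    have := hdiv y hy
    unfold div3 at this
    rw [Fin.sum_univ_three] at this
    exact this
  have d0 := diff_pd (comp_cd hu hx 0) 0
  have d1 := diff_pd (comp_cd hu hx 1) 1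
  have d2 := diff_pd (comp_cd hu hx 2) 2
  have hz : pd k (fun y => pd 0 (fun z => u z 0) y + pd 1 (fun z => u z 1) y
      + pd 2 (fun z => u z 2) y) x = 0 := by
    rw [pd_congr hsum, pd_const]
  rw [pd_add (d0.fun_add d1) d2, pd_add d0 d1] at hz
  linarith
end Main

section Main2

variable {u : (Fin 3 → ℝ) → (Fin 3 → ℝ)}

/-- Laplacian of `y ↦ y a * g y - y b * h y`. -/
lemma lap_cross {g h : (Fin 3 → ℝ) → ℝ} (hg : ∀ y ∈ B3, ContDiffAt ℝ 2 g y)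
    (hh : ∀ y ∈ B3, ContDiffAt ℝ 2 h y) {x : Fin 3 → ℝ} (hx : x ∈ B3) (a b : Fin 3) :
    lap3 (fun y => y a * g y - y b * h y) x
      = (2 * pd a g x + x a * lap3 g x) - (2 * pd b h x + x b * lap3 h x) := by
  have hB : B3 ∈ nhds x := isOpen_B3.mem_nhds hx
  have hgx := hg x hx
  have hhx := hh x hx
  have key : ∀ i : Fin 3, pd i (fun y => pd i (fun z => z a * g z - z b * h z) y) x
      = ((if i = a then 1 else 0) * pd i g x + ((if i = a then 1 else 0) * pd i g x
          + x a * pd i (fun y => pd i g y) x))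
        - ((if i = b then 1 else 0) * pd i h x + ((if i = b then 1 else 0) * pd i h x
          + x b * pd i (fun y => pd i h y) x)) := by
    intro i
    have e1 : (fun y => pd i (fun z => z a * g z - z b * h z) y) =ᶠ[nhds x]
        (fun y => ((if i = a then 1 else 0) * g y + y a * pd i g y)
          - ((if i = b then 1 else 0) * h y + y b * pd i h y)) := by
      filter_upwards [hB] with y hy
      have hgy := (hg y hy).differentiableAt two_ne_zero
      have hhy := (hh y hy).differentiableAt two_ne_zero
      rw [pd_sub ((diff_coord a y).fun_mul hgy) ((diff_coord b y).fun_mul hhy),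
        pd_coord_mul hgy, pd_coord_mul hhy]
    have dG := diff_pd hgx i
    have dH := diff_pd hhx i
    have dgx := hgx.differentiableAt two_ne_zero
    have dhx := hhx.differentiableAt two_ne_zero
    rw [pd_congr e1,
      pd_sub (((differentiableAt_const _).fun_mul dgx).fun_add ((diff_coord a x).fun_mul dG))
        (((differentiableAt_const _).fun_mul dhx).fun_add ((diff_coord b x).fun_mul dH)),
      pd_add ((differentiableAt_const _).fun_mul dgx) ((diff_coord a x).fun_mul dG),
      pd_add ((differentiableAt_const _).fun_mul dhx) ((diff_coord b x).fun_mul dH),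
      pd_const_mul dgx, pd_const_mul dhx, pd_coord_mul dG, pd_coord_mul dH]
  unfold lap3
  calc (∑ i : Fin 3, pd i (fun y => pd i (fun z => z a * g z - z b * h z) y) x)
      = ∑ i : Fin 3, (((if i = a then 1 else 0) * pd i g x + ((if i = a then 1 else 0) * pd i g x
          + x a * pd i (fun y => pd i g y) x))
        - ((if i = b then 1 else 0) * pd i h x + ((if i = b then 1 else 0) * pd i h x
          + x b * pd i (fun y => pd i h y) x))) := Finset.sum_congr rfl (fun i _ => key i)
    _ = _ := by
        simp only [Finset.sum_sub_distrib, Finset.sum_add_distrib, ← Finset.mul_sum,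
          ite_mul, one_mul, zero_mul, Finset.sum_ite_eq' Finset.univ, Finset.mem_univ, if_true]
        ring

lemma cross_comp (k : Fin 3) :
    (fun y : Fin 3 → ℝ => cross3 y (u y) k)
      = fun y => y (k + 1) * u y (k + 2) - y (k + 2) * u y (k + 1) := by
  funext y
  fin_cases k <;> simp [cross3]

lemma lap_v (hu : ContDiffOn ℝ (⊤ : ℕ∞) u B3) (hdiv : ∀ x ∈ B3, div3 u x = 0)
    (hcurl : ∀ x ∈ B3, curl3 u x = 0) {x : Fin 3 → ℝ} (hx : x ∈ B3) (k : Fin 3) :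
    lap3 (fun y => cross3 y (u y) k) x = 0 := by
  rw [cross_comp]
  rw [lap_cross (fun y hy => comp_cd hu hy (k + 2)) (fun y hy => comp_cd hu hy (k + 1)) hx]
  rw [harm hu hdiv hcurl hx, harm hu hdiv hcurl hx,
    pd_symm_eq hcurl hx (k + 1) (k + 2)]
  ring

lemma div_v (hu : ContDiffOn ℝ (⊤ : ℕ∞) u B3) (hcurl : ∀ x ∈ B3, curl3 u x = 0)
    {x : Fin 3 → ℝ} (hx : x ∈ B3) :
    div3 (fun y => cross3 y (u y)) x = 0 := by
  have h0 := congrFun (hcurl x hx) 0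
  have h1 := congrFun (hcurl x hx) 1
  have h2 := congrFun (hcurl x hx) 2
  simp [curl3, sub_eq_zero] at h0 h1 h2
  have dd : ∀ k : Fin 3, DifferentiableAt ℝ (fun y => u y k) x :=
    fun k => (comp_cd hu hx k).differentiableAt two_ne_zero
  unfold div3
  rw [Fin.sum_univ_three]
  rw [show (fun y : Fin 3 → ℝ => cross3 y (u y) 0) = fun y => y 1 * u y 2 - y 2 * u y 1
      from cross_comp 0]
  rw [show (fun y : Fin 3 → ℝ => cross3 y (u y) 1) = fun y => y 2 * u y 0 - y 0 * u y 2
      from cross_comp 1]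
  rw [show (fun y : Fin 3 → ℝ => cross3 y (u y) 2) = fun y => y 0 * u y 1 - y 1 * u y 0
      from cross_comp 2]
  rw [pd_sub ((diff_coord 1 x).fun_mul (dd 2)) ((diff_coord 2 x).fun_mul (dd 1)),
    pd_sub ((diff_coord 2 x).fun_mul (dd 0)) ((diff_coord 0 x).fun_mul (dd 2)),
    pd_sub ((diff_coord 0 x).fun_mul (dd 1)) ((diff_coord 1 x).fun_mul (dd 0)),
    pd_coord_mul (dd 2), pd_coord_mul (dd 1), pd_coord_mul (dd 0),
    pd_coord_mul (dd 2), pd_coord_mul (dd 1), pd_coord_mul (dd 0)]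
  simp only [Fin.reduceEq, if_false, if_true, reduceIte, zero_mul, one_mul, zero_add, add_zero]
  linear_combination (-(x 0)) * h0 + (-(x 1)) * h1 + (-(x 2)) * h2

end Main2

/-- If `u` is a smooth Riesz field on the unit ball, then `v(x) = x × u(x)` is
componentwise harmonic, divergence free, and solves the Lamé equation for all `λ, μ`. -/
theorem stmt2 (u : (Fin 3 → ℝ) → (Fin 3 → ℝ)) (hu : ContDiffOn ℝ (⊤ : ℕ∞) u B3)
    (hdiv : ∀ x ∈ B3, div3 u x = 0) (hcurl : ∀ x ∈ B3, curl3 u x = 0) :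
    ∀ x ∈ B3,
      (∀ i : Fin 3, lap3 (fun y => cross3 y (u y) i) x = 0) ∧
      div3 (fun y => cross3 y (u y)) x = 0 ∧
      ∀ lam mu : ℝ, ∀ i : Fin 3,
        mu * lap3 (fun y => cross3 y (u y) i) x +
          (lam + mu) * pd i (div3 (fun y => cross3 y (u y))) x = 0 := by
  intro x hx
  have hlap := fun i => lap_v hu hdiv hcurl hx i
  refine ⟨hlap, div_v hu hcurl hx, fun lam mu i => ?_⟩
  have e1 : (div3 (fun y => cross3 y (u y))) =ᶠ[nhds x] (fun _ => (0:ℝ)) := by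
    filter_upwards [isOpen_B3.mem_nhds hx] with y hy
    exact div_v hu hcurl hy
  rw [hlap i, pd_congr e1, pd_const]
  ring
end

section
/- Let Y be a harmonic homogeneous polynomial of degree ℓ on ℝ³. Then the vector field x ↦ (2ℓ+1)·Y(x)·x − |x|²·∇Y(x) is a vector-valued harmonic homogeneous polynomial of degree ℓ+1 (each component is a harmonic polynomial, homogeneous of degree ℓ+1). -/
open MvPolynomial

lemma deg3 (d : Fin 3 →₀ ℕ) : d.degree = ∑ j : Fin 3, d j :=
  Finsupp.sum_fintype d (fun _ m => m) (fun _ => rfl)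

lemma deg3' {n : ℕ} {φ : MvPolynomial (Fin 3) ℝ} (h : φ.IsHomogeneous n)
    {d : Fin 3 →₀ ℕ} (hd : d ∈ φ.support) : ∑ j : Fin 3, d j = n := by
  rw [← deg3, Finsupp.degree_eq_weight_one]
  exact h (MvPolynomial.mem_support_iff.mp hd)

lemma pderiv_comm' (i j : Fin 3) (p : MvPolynomial (Fin 3) ℝ) :
    pderiv i (pderiv j p) = pderiv j (pderiv i p) := by
  induction p using MvPolynomial.induction_on with
  | C a => simp
  | add p q hp hq => simp [hp, hq]
  | mul_X p k ih =>
    simp only [pderiv_mul, pderiv_X, map_add, Pi.single_apply]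
    split_ifs <;> simp [ih] <;> ring

lemma euler {n : ℕ} {φ : MvPolynomial (Fin 3) ℝ} (h : φ.IsHomogeneous n) :
    ∑ j : Fin 3, X j * pderiv j φ = (n : ℝ) • φ := by
  conv_lhs => rw [φ.as_sum]
  conv_rhs => rw [φ.as_sum]
  rw [Finset.smul_sum]
  simp only [map_sum, Finset.mul_sum]
  rw [Finset.sum_comm]
  refine Finset.sum_congr rfl fun d hd => ?_
  have hdeg := deg3' h hd
  have step : ∀ j : Fin 3, X j * pderiv j (monomial d (coeff d φ)) =
      (d j : ℝ) • monomial d (coeff d φ) := by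
    intro j
    rw [pderiv_monomial]
    rcases Nat.eq_zero_or_pos (d j) with h0 | h0
    · simp [h0]
    · have hX : (X j : MvPolynomial (Fin 3) ℝ) = monomial (Finsupp.single j 1) 1 := rfl
      have hsum : Finsupp.single j 1 + (d - Finsupp.single j 1) = d := by
        ext k
        simp only [Finsupp.add_apply, Finsupp.tsub_apply, Finsupp.single_apply]
        rcases eq_or_ne j k with rfl | hk
        · simp; omega
        · simp [hk]
      rw [hX, monomial_mul, hsum, MvPolynomial.smul_monomial]
      congr 1
      rw [smul_eq_mul]; ring
  rw [Finset.sum_congr rfl fun j _ => step j, ← Finset.sum_smul, ← hdeg]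
  push_cast
  rfl

lemma pderiv_isHomog {n : ℕ} {φ : MvPolynomial (Fin 3) ℝ} (i : Fin 3)
    (h : φ.IsHomogeneous (n + 1)) : (pderiv i φ).IsHomogeneous n := by
  conv_lhs => rw [φ.as_sum]
  rw [map_sum]
  refine IsHomogeneous.sum _ _ _ fun d hd => ?_
  rw [pderiv_monomial]
  rcases Nat.eq_zero_or_pos (d i) with h0 | h0
  · simp only [h0, Nat.cast_zero, mul_zero, monomial_zero]
    exact isHomogeneous_zero _ _ _
  · refine isHomogeneous_monomial _ ?_
    have hdeg := deg3' h hd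
    rw [deg3]
    simp only [Finsupp.tsub_apply, Fin.sum_univ_three] at hdeg ⊢
    fin_cases i <;> simp [Finsupp.single_apply] at h0 ⊢ <;> omega

lemma pderiv_homog_zero {φ : MvPolynomial (Fin 3) ℝ} (i : Fin 3)
    (h : φ.IsHomogeneous 0) : pderiv i φ = 0 := by
  conv_lhs => rw [φ.as_sum]
  rw [map_sum]
  refine Finset.sum_eq_zero fun d hd => ?_
  have hdeg : d.degree = 0 := by
    rw [deg3]; exact deg3' h hd
  rw [Finsupp.degree_eq_zero_iff] at hdeg
  subst hdeg
  simp [pderiv_monomial]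


/-- If `Y` is a harmonic homogeneous polynomial of degree `ℓ` on `ℝ³`, then the field
`x ↦ (2ℓ+1)·Y(x)·x − |x|²·∇Y(x)` is a vector-valued harmonic homogeneous polynomial
of degree `ℓ+1`. -/
theorem stmt3 (ℓ : ℕ) (Y : MvPolynomial (Fin 3) ℝ) (hhom : Y.IsHomogeneous ℓ)
    (hharm : ∑ i : Fin 3, pderiv i (pderiv i Y) = 0) :
    ∀ i : Fin 3,
      (((2 * ℓ + 1 : ℕ) : ℝ) • (Y * X i)
          - (∑ j : Fin 3, X j ^ 2) * pderiv i Y).IsHomogeneous (ℓ + 1) ∧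
      ∑ j : Fin 3, pderiv j (pderiv j
          (((2 * ℓ + 1 : ℕ) : ℝ) • (Y * X i)
            - (∑ j : Fin 3, X j ^ 2) * pderiv i Y)) = 0 := by
  intro i
  set D : MvPolynomial (Fin 3) ℝ := pderiv i Y with hD
  set r2 : MvPolynomial (Fin 3) ℝ := ∑ j : Fin 3, X j ^ 2 with hr2
  set c : ℝ := ((2 * ℓ + 1 : ℕ) : ℝ) with hc
  have hr2hom : r2.IsHomogeneous 2 :=
    IsHomogeneous.sum _ _ _ fun j _ => isHomogeneous_X_pow j 2
  have hshom : (c • (Y * X i)).IsHomogeneous (ℓ + 1) := by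
    rw [MvPolynomial.smul_eq_C_mul]
    exact (hhom.mul (isHomogeneous_X ℝ i)).C_mul c
  constructor
  · rcases ℓ with _ | m
    · rw [show D = 0 from pderiv_homog_zero i hhom, mul_zero, sub_zero]
      exact hshom
    · have h2 : (r2 * D).IsHomogeneous (2 + m) :=
        hr2hom.mul (pderiv_isHomog i hhom)
      rw [show 2 + m = m + 1 + 1 by omega] at h2
      exact hshom.sub h2
  · -- harmonicity
    have hA : ∑ j : Fin 3, pderiv j (pderiv j (Y * X i)) = 2 * D := by
      have step : ∀ j : Fin 3, pderiv j (pderiv j (Y * X i)) =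
          pderiv j (pderiv j Y) * X i + (if i = j then 2 * pderiv j Y else 0) := by
        intro j
        rcases eq_or_ne i j with rfl | hij
        · simp [pderiv_mul, pderiv_X_self]
          ring
        · simp only [pderiv_mul, pderiv_X_of_ne hij, if_neg hij, map_add, pderiv_mul,
            mul_zero, map_zero, zero_mul, add_zero]
      rw [Finset.sum_congr rfl fun j _ => step j, Finset.sum_add_distrib,
        ← Finset.sum_mul, hharm, zero_mul, zero_add, Finset.sum_ite_eq]
      simp [hD]
    have hr : ∀ j : Fin 3, pderiv j r2 = 2 * X j := by
      intro j
      rw [hr2, map_sum, Fin.sum_univ_three]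
      fin_cases j <;>
        simp [pderiv_pow, pderiv_X_self, pderiv_X_of_ne, Fin.ext_iff] <;> ring
    have hD0 : ∑ j : Fin 3, pderiv j (pderiv j D) = 0 := by
      have step : ∀ j : Fin 3, pderiv j (pderiv j D) =
          pderiv i (pderiv j (pderiv j Y)) := by
        intro j
        rw [hD, pderiv_comm' j i Y, pderiv_comm' j i (pderiv j Y)]
      rw [Finset.sum_congr rfl fun j _ => step j, ← map_sum, hharm, map_zero]
    have hEuler : ∑ j : Fin 3, X j * pderiv j D = (ℓ : ℝ) • D - D := by
      have h1 := congrArg (pderiv i) (euler hhom)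
      rw [map_sum, Derivation.map_smul] at h1
      have step : ∀ j : Fin 3, pderiv i (X j * pderiv j Y) =
          (if j = i then pderiv j Y else 0) + X j * pderiv j D := by
        intro j
        rw [pderiv_mul, hD, pderiv_comm' i j]
        rcases eq_or_ne j i with rfl | hj
        · simp [pderiv_X_self]
        · simp [pderiv_X_of_ne hj, hj]
      rw [Finset.sum_congr rfl fun j _ => step j, Finset.sum_add_distrib,
        Finset.sum_ite_eq'] at h1
      simp only [Finset.mem_univ, if_pos] at h1
      rw [hD] at h1 ⊢
      linear_combination h1
    have hB : ∑ j : Fin 3, pderiv j (pderiv j (r2 * D)) =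
        6 * D + 4 * (∑ j : Fin 3, X j * pderiv j D)
          + r2 * (∑ j : Fin 3, pderiv j (pderiv j D)) := by
      have step : ∀ j : Fin 3, pderiv j (pderiv j (r2 * D)) =
          2 * D + 4 * (X j * pderiv j D) + r2 * pderiv j (pderiv j D) := by
        intro j
        have h2 : pderiv j (2 : MvPolynomial (Fin 3) ℝ) = 0 := by
          rw [← map_ofNat (C : ℝ →+* MvPolynomial (Fin 3) ℝ) 2, pderiv_C]
        simp only [pderiv_mul, map_add, hr, pderiv_X_self, h2, zero_mul, mul_one, zero_add]
        ring
      rw [Finset.sum_congr rfl fun j _ => step j, Finset.sum_add_distrib,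
        Finset.sum_add_distrib, ← Finset.mul_sum, ← Finset.mul_sum, ← Finset.mul_sum,
        Finset.sum_const, Finset.card_univ, Fintype.card_fin, nsmul_eq_mul]
      push_cast
      ring
    have expand : ∀ j : Fin 3, pderiv j (pderiv j (c • (Y * X i) - r2 * D)) =
        c • pderiv j (pderiv j (Y * X i)) - pderiv j (pderiv j (r2 * D)) := by
      intro j
      rw [map_sub, Derivation.map_smul, map_sub, Derivation.map_smul]
    rw [Finset.sum_congr rfl fun j _ => expand j, Finset.sum_sub_distrib,
      ← Finset.smul_sum, hA, hB, hEuler, hD0, mul_zero, add_zero,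
      MvPolynomial.smul_eq_C_mul, MvPolynomial.smul_eq_C_mul, hc]
    push_cast
    rw [map_add, map_mul, map_one, map_ofNat]
    ring
end
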